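/- arXiv:2209.00271 — 2 statements merged into one kernel-verified Lean document; each statement's English description precedes it below -/
import Mathlib

section
/- Let S be a string of length n, and let i ≥ 1 and k ≥ 0 be such that OC[i+1..i+k+1] = 0^k 1 (that is, OC[i+1] = ⋯ = OC[i+k] = 0 and OC[i+k+1] = 1, with i+k+1 ≤ n). If P[i] ≥ k, then P[i] − k ∈ Bord[i], i.e., the prefix S[1..i] has a border of length P[i] − k. -/
variable {α : Type*}

/-- `β` is a border of `S`: a proper (possibly empty) prefix that is also a suffix. -/
def IsBorder (β S : List α) : Prop :=
  β ≠ S ∧ β <+: S ∧ β <:+ S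

/-- `v` occurs in `T` at (0-based) position `p`. -/
def OccursAt (v T : List α) (p : ℕ) : Prop :=
  p + v.length ≤ T.length ∧ v <+: T.drop p

/-- A string is closed if it has length 1 or it has a border with no internal occurrence. -/
def IsClosedWord (S : List α) : Prop :=
  S.length = 1 ∨ ∃ β, IsBorder β S ∧
    ∀ p, OccursAt β S p → p = 0 ∨ p = S.length - β.length

open Classical in
/-- `OCval S i = 1` if the prefix `S[1..i]` is closed, and `0` otherwise. -/
noncomputable def OCval (S : List α) (i : ℕ) : ℕ :=
  if IsClosedWord (S.take i) then 1 else 0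

/-- `Parr S i` is the length of the longest prefix of `S[1..i]` having at least
two (possibly overlapping) occurrences in `S[1..i]`. -/
noncomputable def Parr (S : List α) (i : ℕ) : ℕ :=
  sSup {ℓ | ∃ p q : ℕ, p < q ∧ OccursAt (S.take ℓ) (S.take i) p ∧
    OccursAt (S.take ℓ) (S.take i) q}

/-- `Barr S i` is the length of the longest border of `S[1..i]`. -/
noncomputable def Barr (S : List α) (i : ℕ) : ℕ :=
  sSup {ℓ | IsBorder (S.take ℓ) (S.take i)}

/-- `Bord S i` is the set of lengths of borders of `S[1..i]`. -/
def Bord (S : List α) (i : ℕ) : Set ℕ :=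
  {ℓ | IsBorder (S.take ℓ) (S.take i)}

/-- The substring `S[i..j]` (1-based, inclusive). -/
def Substr (S : List α) (i j : ℕ) : List α :=
  (S.take j).drop (i - 1)

/-- `S[i..j]` is a maximal closed substring of `S`. -/
def IsMCS (S : List α) (i j : ℕ) : Prop :=
  1 ≤ i ∧ i ≤ j ∧ j ≤ S.length ∧ IsClosedWord (Substr S i j) ∧
    (j = S.length ∨ ¬ IsClosedWord (Substr S i (j + 1))) ∧
    (i = 1 ∨ ¬ IsClosedWord (Substr S (i - 1) j))

open Classical in
/-- Number of maximal blocks of consecutive `1`s in the OC array of `S`. -/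
noncomputable def ocRuns (S : List α) : ℕ :=
  ((Finset.Icc 1 S.length).filter
    (fun i => OCval S i = 1 ∧ (i = 1 ∨ OCval S (i - 1) = 0))).card

/-- The OC array of `S` as a list (1-based entries). -/
noncomputable def ocList (S : List α) : List ℕ :=
  (List.range S.length).map (fun j => OCval S (j + 1))

section St5Aux

variable {α : Type*}

/-- The set whose supremum defines `Parr`. -/
def Pset (S : List α) (i : ℕ) : Set ℕ :=
  {ℓ | ∃ p q : ℕ, p < q ∧ OccursAt (S.take ℓ) (S.take i) p ∧
    OccursAt (S.take ℓ) (S.take i) q}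

lemma parr_def (S : List α) (i : ℕ) : Parr S i = sSup (Pset S i) := rfl

lemma take_prefix_take {S : List α} {a b : ℕ} (h : a ≤ b) : S.take a <+: S.take b := by
  have hh : (S.take b).take a = S.take a := by rw [List.take_take, min_eq_left h]
  rw [← hh]; exact List.take_prefix _ _

lemma occ_mono_v {u v T : List α} {p : ℕ} (h : u <+: v) (ho : OccursAt v T p) :
    OccursAt u T p :=
  ⟨le_trans (Nat.add_le_add_left h.length_le p) ho.1, h.trans ho.2⟩

lemma occ_mono_T {v T T' : List α} {p : ℕ} (h : T <+: T') (ho : OccursAt v T p) :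
    OccursAt v T' p := by
  obtain ⟨r, rfl⟩ := h
  refine ⟨by have := ho.1; simp only [List.length_append]; omega, ?_⟩
  have hp : p ≤ T.length := le_trans (Nat.le_add_right _ _) ho.1
  rw [List.drop_append_of_le_length hp]
  exact ho.2.trans (List.prefix_append _ _)

lemma occ_take {v T : List α} {p m : ℕ} (ho : OccursAt v T p) (hm : p + v.length ≤ m) :
    OccursAt v (T.take m) p := by
  refine ⟨by rw [List.length_take]; have := ho.1; omega, ?_⟩
  rw [List.drop_take, List.prefix_take_iff]
  exact ⟨ho.2, by omega⟩

lemma mem_Pset_lt {S : List α} {i ℓ : ℕ} (hiS : i ≤ S.length) (h : ℓ ∈ Pset S i) :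
    ℓ + 1 ≤ i := by
  obtain ⟨p, q, hpq, _, hq⟩ := h
  have h1 := hq.1
  rw [List.length_take, List.length_take] at h1
  omega

lemma zero_mem_Pset {S : List α} {i : ℕ} (hi1 : 1 ≤ i) (hS1 : 1 ≤ S.length) :
    0 ∈ Pset S i := by
  refine ⟨0, 1, one_pos, ⟨by simp, by simp⟩, ⟨?_, by simp⟩⟩
  rw [List.take_zero, List.length_take]
  simp; omega

lemma bddAbove_Pset {S : List α} {i : ℕ} (hiS : i ≤ S.length) : BddAbove (Pset S i) :=
  ⟨i, fun ℓ h => by have := mem_Pset_lt hiS h; omega⟩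

lemma parr_mem {S : List α} {i : ℕ} (hi1 : 1 ≤ i) (hiS : i ≤ S.length) :
    Parr S i ∈ Pset S i :=
  Nat.sSup_mem ⟨0, zero_mem_Pset hi1 (le_trans hi1 hiS)⟩ (bddAbove_Pset hiS)

lemma le_parr {S : List α} {i ℓ : ℕ} (hiS : i ≤ S.length) (h : ℓ ∈ Pset S i) :
    ℓ ≤ Parr S i :=
  le_csSup (bddAbove_Pset hiS) h

lemma Pset_mono {S : List α} {i j : ℕ} (hij : i ≤ j) : Pset S i ⊆ Pset S j := by
  rintro ℓ ⟨p, q, hpq, hp, hq⟩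
  exact ⟨p, q, hpq, occ_mono_T (take_prefix_take hij) hp,
    occ_mono_T (take_prefix_take hij) hq⟩

lemma parr_mono {S : List α} {i j : ℕ} (hi1 : 1 ≤ i) (hjS : j ≤ S.length) (hij : i ≤ j) :
    Parr S i ≤ Parr S j :=
  le_parr hjS (Pset_mono hij (parr_mem hi1 (le_trans hij hjS)))

lemma parr_succ_le {S : List α} {i : ℕ} (hi1 : 1 ≤ i) (hiS : i + 1 ≤ S.length) :
    Parr S (i + 1) ≤ Parr S i + 1 := by
  obtain ⟨p, q, hpq, hp, hq⟩ := parr_mem (S := S) (i := i + 1) (by omega) hiS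
  set ℓ := Parr S (i + 1) with hℓ
  rcases Nat.eq_zero_or_pos ℓ with h0 | h1
  · omega
  have hlt : ℓ + 1 ≤ i + 1 := mem_Pset_lt hiS ⟨p, q, hpq, hp, hq⟩
  have hpre : S.take (ℓ - 1) <+: S.take ℓ := take_prefix_take (by omega)
  have hlen : (S.take (ℓ - 1)).length = ℓ - 1 := by rw [List.length_take]; omega
  have hlenℓ : (S.take ℓ).length = ℓ := by rw [List.length_take]; omega
  have hq1 := hq.1
  rw [hlenℓ, List.length_take] at hq1
  have htt : (S.take (i + 1)).take i = S.take i := by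
    rw [List.take_take, min_eq_left (by omega)]
  have hmem : (ℓ - 1) ∈ Pset S i := by
    refine ⟨p, q, hpq, ?_, ?_⟩
    · have h := occ_take (occ_mono_v hpre hp) (m := i) (by rw [hlen]; omega)
      rwa [htt] at h
    · have h := occ_take (occ_mono_v hpre hq) (m := i) (by rw [hlen]; omega)
      rwa [htt] at h
  have := le_parr (by omega) hmem
  omega

lemma parr_of_not_closed {S : List α} {j : ℕ} (hj2 : 2 ≤ j) (hjS : j ≤ S.length)
    (hnc : ¬ IsClosedWord (S.take j)) : Parr S j ≤ Parr S (j - 1) := by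
  obtain ⟨p, q, hpq, hp, hq⟩ := parr_mem (S := S) (i := j) (by omega) hjS
  set ℓ := Parr S j with hℓdef
  have hℓj : ℓ + 1 ≤ j := mem_Pset_lt hjS ⟨p, q, hpq, hp, hq⟩
  have hlenℓ : (S.take ℓ).length = ℓ := by rw [List.length_take]; omega
  have hlenj : (S.take j).length = j := by rw [List.length_take]; omega
  have htt : (S.take j).take (j - 1) = S.take (j - 1) := by
    rw [List.take_take, min_eq_left (by omega)]
  by_cases hmem : ℓ ∈ Pset S (j - 1)
  · exact le_parr (by omega) hmem
  exfalso
  apply hnc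
  have hq1 := hq.1
  rw [hlenℓ, hlenj] at hq1
  have hqj : q + ℓ = j := by
    by_contra hne
    apply hmem
    refine ⟨p, q, hpq, ?_, ?_⟩
    · have h := occ_take hp (m := j - 1) (by rw [hlenℓ]; omega)
      rwa [htt] at h
    · have h := occ_take hq (m := j - 1) (by rw [hlenℓ]; omega)
      rwa [htt] at h
  right
  refine ⟨S.take ℓ, ⟨?_, ?_, ?_⟩, ?_⟩
  · intro heq
    have h := congrArg List.length heq
    rw [hlenℓ, hlenj] at h; omega
  · exact take_prefix_take (by omega)
  · have hdl : ((S.take j).drop q).length = ℓ := by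
      rw [List.length_drop, hlenj]; omega
    have heq : S.take ℓ = (S.take j).drop q := hq.2.eq_of_length (by rw [hlenℓ, hdl])
    rw [heq]; exact List.drop_suffix _ _
  · intro p' hp'
    by_contra hcon
    push_neg at hcon
    obtain ⟨hne0, hnej⟩ := hcon
    rw [hlenj, hlenℓ] at hnej
    apply hmem
    have hop' := hp'.1
    rw [hlenℓ, hlenj] at hop'
    refine ⟨0, p', by omega, ?_, ?_⟩
    · refine ⟨?_, ?_⟩
      · rw [hlenℓ, List.length_take]; omega
      · rw [List.drop_zero]
        exact take_prefix_take (by omega)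
    · have h := occ_take hp' (m := j - 1) (by rw [hlenℓ]; omega)
      rwa [htt] at h

lemma parr_lt_of_closed {S : List α} {j : ℕ} (hj2 : 2 ≤ j) (hjS : j ≤ S.length)
    (hc : IsClosedWord (S.take j)) : Parr S (j - 1) < Parr S j := by
  have hlenj : (S.take j).length = j := by rw [List.length_take]; omega
  rcases hc with h1 | ⟨β, ⟨hβne, hβpre, hβsuf⟩, hno⟩
  · rw [hlenj] at h1; omega
  set b := β.length with hb
  have hbj : b ≤ j := by have := hβpre.length_le; omega
  have hblt : b < j := by
    rcases lt_or_eq_of_le hbj with h | h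
    · exact h
    · exact absurd (hβpre.eq_of_length (by omega)) hβne
  have hb1 : 1 ≤ b := by
    by_contra h
    have hb0 : β = [] := List.length_eq_zero_iff.mp (by omega)
    have h1 := hno 1 ⟨by rw [hlenj]; omega, by simp [hb0]⟩
    rw [hlenj] at h1
    omega
  have hβeq : β = S.take b := by
    have h1 : β = (S.take j).take b := by
      rw [hb]; exact List.prefix_iff_eq_take.mp hβpre
    rw [h1, List.take_take, min_eq_left hbj]
  obtain ⟨X, hX⟩ := hβsuf
  have hXlen : X.length = j - b := by
    have h := congrArg List.length hX
    rw [List.length_append, hlenj] at h; omega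
  have hoccsuf : OccursAt β (S.take j) (j - b) := by
    refine ⟨by rw [hlenj]; omega, ?_⟩
    rw [← hX, ← hXlen, List.drop_left]
  rw [hβeq] at hoccsuf
  have hocc0 : OccursAt (S.take b) (S.take j) 0 := by
    refine ⟨?_, ?_⟩
    · rw [hlenj, List.length_take]; omega
    · rw [List.drop_zero]; exact take_prefix_take hbj
  have hble : b ≤ Parr S j := le_parr hjS ⟨0, j - b, by omega, hocc0, hoccsuf⟩
  by_contra hcon
  push_neg at hcon
  obtain ⟨p, q, hpq, hpo, hqo⟩ := parr_mem (S := S) (i := j - 1) (by omega) (by omega)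
  set ℓ := Parr S (j - 1) with hℓ
  have hℓlt : ℓ + 1 ≤ j - 1 := mem_Pset_lt (S := S) (i := j - 1) (by omega) ⟨p, q, hpq, hpo, hqo⟩
  have hbℓ : b ≤ ℓ := le_trans hble hcon
  have hβocc : OccursAt β (S.take (j - 1)) q := by
    rw [hβeq]
    exact occ_mono_v (take_prefix_take hbℓ) hqo
  have hβocc' : OccursAt β (S.take j) q := occ_mono_T (take_prefix_take (by omega)) hβocc
  have hqd := hno q hβocc'
  rw [hlenj] at hqd
  have hq1 := hβocc.1
  rw [List.length_take] at hq1
  omega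

end St5Aux

/-- If `OC[i+1..i+k+1] = 0^k 1` and `P[i] ≥ k`,
then `P[i] − k ∈ Bord[i]`. -/
theorem statement_5 {α : Type*} (S : List α) (i k : ℕ)
    (hi1 : 1 ≤ i) (hin : i + k + 1 ≤ S.length)
    (hzeros : ∀ j : ℕ, i + 1 ≤ j → j ≤ i + k → OCval S j = 0)
    (hone : OCval S (i + k + 1) = 1)
    (hPk : k ≤ Parr S i) :
    Parr S i - k ∈ Bord S i := by
  have hiS : i ≤ S.length := by omega
  set P := Parr S i with hP
  have hPlt : P + 1 ≤ i := mem_Pset_lt hiS (parr_mem hi1 hiS)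
  have hconst : ∀ m, m ≤ k → Parr S (i + m) = P := by
    intro m
    induction m with
    | zero => intro _; exact hP.symm
    | succ n ih =>
      intro hnk
      have hn := ih (by omega)
      have h0 : OCval S (i + n + 1) = 0 := hzeros (i + n + 1) (by omega) (by omega)
      have hnc : ¬ IsClosedWord (S.take (i + n + 1)) := by
        intro hcl
        rw [OCval, if_pos hcl] at h0; omega
      have hle := parr_of_not_closed (j := i + n + 1) (by omega) (by omega) hnc
      have hle' : Parr S (i + n + 1) ≤ Parr S (i + n) := by simpa using hle
      have hge : Parr S (i + n) ≤ Parr S (i + n + 1) :=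
        parr_mono (by omega) (by omega) (by omega)
      show Parr S (i + n + 1) = P
      omega
  have hPik : Parr S (i + k) = P := hconst k le_rfl
  have hcl : IsClosedWord (S.take (i + k + 1)) := by
    by_contra h
    rw [OCval, if_neg h] at hone; omega
  have hlt := parr_lt_of_closed (j := i + k + 1) (by omega) hin hcl
  have hlt' : Parr S (i + k) < Parr S (i + k + 1) := by simpa using hlt
  have hub := parr_succ_le (S := S) (i := i + k) (by omega) (by omega)
  have hval : Parr S (i + k + 1) = P + 1 := by omega
  obtain ⟨p, q, hpq, hpo, hqo⟩ := parr_mem (S := S) (i := i + k + 1) (by omega) hin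
  rw [hval] at hpo hqo
  have hlen1 : (S.take (P + 1)).length = P + 1 := by rw [List.length_take]; omega
  have hlenW : (S.take (i + k + 1)).length = i + k + 1 := by rw [List.length_take]; omega
  have h1 := hpo.1
  have h2 := hqo.1
  rw [hlen1, hlenW] at h1 h2
  have hqeq : q + (P + 1) = i + k + 1 := by
    by_contra hne
    have htt : (S.take (i + k + 1)).take (i + k) = S.take (i + k) := by
      rw [List.take_take, min_eq_left (by omega)]
    have hmem : (P + 1) ∈ Pset S (i + k) := by
      refine ⟨p, q, hpq, ?_, ?_⟩
      · have h := occ_take hpo (m := i + k) (by rw [hlen1]; omega)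
        rwa [htt] at h
      · have h := occ_take hqo (m := i + k) (by rw [hlen1]; omega)
        rwa [htt] at h
    have := le_parr (by omega) hmem
    omega
  have hdropeq : S.take (P + 1) = (S.take (i + k + 1)).drop q := by
    apply hqo.2.eq_of_length
    rw [hlen1, List.length_drop, hlenW]; omega
  have key : (S.take i).drop q = S.take (P - k) := by
    have htt : (S.take (i + k + 1)).take i = S.take i := by
      rw [List.take_take, min_eq_left (by omega)]
    rw [← htt, List.drop_take, ← hdropeq, List.take_take]
    congr 1
    omega
  show IsBorder (S.take (P - k)) (S.take i)
  refine ⟨?_, ?_, ?_⟩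
  · intro heq
    have h := congrArg List.length heq
    rw [List.length_take, List.length_take] at h
    omega
  · exact take_prefix_take (by omega)
  · rw [← key]; exact List.drop_suffix _ _
end

section
/- There exists an infinite binary string u over the alphabet {a,b}, defined by u = a · ∏_{k>0} \overline{u[k]} · u[1..k] (where \overline{c} denotes the complement of the letter c), such that every finite prefix of the OC array of every prefix of u agrees with the infinite binary sequence ∏_{k>0} 1 0^k = 10 100 1000 10000 ⋯ . Consequently, for every integer N ≥ 1 there is a binary string of length n = Σ_{k=1}^{N}(k+1) whose OC array contains exactly N maximal blocks of 1s, so the O(√n) bound on the number of runs in the OC array is tight. -/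
variable {α : Type*}

/-!
Write `u` for the word (1-based, as in the paper) and `tri q = q (q + 1) / 2`, so that `u[1..tri q]`
is `a` followed by the blocks `ū[k] u[1..k]`, `1 ≤ k < q`. The prefix `u[1..tri (q + 1)]` ends with
`u[1..q]`, a border occurring only as a prefix and a suffix, so it is closed. A prefix of length
`tri q + 1 + s` with `s < q` has only borders of length `< q`, and such a border `u[1..ℓ]` also
occurs inside the block `ū[q-1] u[1..q-1]`, so the prefix is not closed.

Both the bound on borders and the absence of internal occurrences of `u[1..q]` come from one
estimate. An occurrence of `u[1..ℓ]` with `ℓ ≥ q` straddling the letter `ū[q]` at position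
`tri q + 1` reads `x ū[q] u[1..s]` with `|x| = r`; the bound on borders of shorter prefixes
gives `tri r < q - 1` and `tri s < r + s + 1`, which with `q ≤ r + s + 1` force `q ≤ 5`. The prefixes with `q ≤ 5` (of length at most 21) are checked by evaluation.
-/

def PrefixOccursAt (f : ℕ → α) (ℓ p : ℕ) : Prop :=
  ∀ i < ℓ, f (p + i) = f i

instance [DecidableEq α] (f : ℕ → α) (ℓ p : ℕ) : Decidable (PrefixOccursAt f ℓ p) :=
  inferInstanceAs (Decidable (∀ i < ℓ, f (p + i) = f i))

theorem PrefixOccursAt.eq_zero {f : ℕ → α} {ℓ : ℕ} (h : PrefixOccursAt f ℓ 1) :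
    ∀ i ≤ ℓ, f i = f 0
  | 0, _ => rfl
  | i + 1, hi => by
    rw [← h.eq_zero i (by omega), ← h i (by omega), Nat.add_comm]

section MapRange

variable (f : ℕ → α)

theorem take_map_range (n i : ℕ) :
    ((List.range n).map f).take i = (List.range (min i n)).map f := by
  rw [← List.map_take, List.take_range]

theorem map_range_prefix {ℓ n : ℕ} (h : ℓ ≤ n) :
    (List.range ℓ).map f <+: (List.range n).map f := by
  rw [List.prefix_iff_eq_take, List.length_map, List.length_range, take_map_range,
    min_eq_left h]

theorem eq_map_range_of_prefix {β : List α} {n : ℕ} (h : β <+: (List.range n).map f) :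
    β = (List.range β.length).map f := by
  have hlen : β.length ≤ n := by simpa using h.length_le
  rw [List.prefix_iff_eq_take, take_map_range, min_eq_left hlen] at h
  exact h

theorem occursAt_map_range_iff (ℓ n p : ℕ) :
    OccursAt ((List.range ℓ).map f) ((List.range n).map f) p ↔
      p + ℓ ≤ n ∧ PrefixOccursAt f ℓ p := by
  simp only [OccursAt, List.length_map, List.length_range, List.prefix_iff_getElem,
    List.length_drop, List.getElem_map, List.getElem_range, List.getElem_drop]
  constructor
  · rintro ⟨hle, -, h⟩
    exact ⟨hle, fun i hi => (h i hi).symm⟩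
  · rintro ⟨hle, h⟩
    exact ⟨hle, by omega, fun i hi => (h i hi).symm⟩

theorem suffix_iff_occursAt {v T : List α} :
    v <:+ T ↔ OccursAt v T (T.length - v.length) := by
  constructor
  · intro h
    have hlen := h.length_le
    refine ⟨by omega, ?_⟩
    rw [← List.suffix_iff_eq_drop.mp h]
  · rintro ⟨hlen, h⟩
    have heq : v = T.drop (T.length - v.length) :=
      h.eq_of_length (by simp only [List.length_drop]; omega)
    rw [List.suffix_iff_eq_drop]
    exact heq

theorem suffix_map_range_iff (ℓ n : ℕ) :
    (List.range ℓ).map f <:+ (List.range n).map f ↔ ℓ ≤ n ∧ PrefixOccursAt f ℓ (n - ℓ) := by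
  rw [suffix_iff_occursAt, occursAt_map_range_iff]
  simp only [List.length_map, List.length_range]
  exact and_congr_left fun _ => by omega

end MapRange

theorem OCval_eq_zero_iff (S : List α) (i : ℕ) : OCval S i = 0 ↔ OCval S i ≠ 1 := by
  unfold OCval
  split_ifs <;> simp

def tri : ℕ → ℕ
  | 0 => 0
  | n + 1 => tri n + (n + 1)

theorem tri_succ (n : ℕ) : tri (n + 1) = tri n + (n + 1) := rfl

theorem le_tri (n : ℕ) : n ≤ tri n := by
  induction n with
  | zero => rfl
  | succ n ih => rw [tri_succ]; omega

theorem tri_strictMono : StrictMono tri :=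
  strictMono_nat_of_lt_succ fun n => by rw [tri_succ]; omega

theorem two_mul_tri (n : ℕ) : 2 * tri n = n * (n + 1) := by
  induction n with
  | zero => rfl
  | succ n ih => rw [tri_succ, mul_add, ih]; ring

theorem div_two_eq_tri (n : ℕ) : n * (n + 1) / 2 = tri n := by
  rw [← two_mul_tri, Nat.mul_div_cancel_left _ two_pos]

theorem sum_Icc_add_one_add_one (N : ℕ) : ∑ k ∈ Finset.Icc 1 N, (k + 1) + 1 = tri (N + 1) := by
  induction N with
  | zero => rfl
  | succ N ih =>
    rw [Finset.sum_Icc_succ_top (by omega), tri_succ]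
    omega

theorem exists_eq_tri_add {n : ℕ} (hn : 1 ≤ n) : ∃ q s, s ≤ q ∧ n = tri q + 1 + s := by
  induction n with
  | zero => omega
  | succ n ih =>
    rcases Nat.eq_zero_or_pos n with rfl | hn
    · exact ⟨0, 0, le_rfl, rfl⟩
    obtain ⟨q, s, hsq, rfl⟩ := ih hn
    rcases hsq.lt_or_eq with hlt | rfl
    · exact ⟨q, s + 1, hlt, by omega⟩
    · exact ⟨s + 1, 0, Nat.zero_le _, by rw [tri_succ]; omega⟩

theorem tri_sub_one_ne {k : ℕ} (hk : 2 ≤ k) (k' : ℕ) : tri k - 1 ≠ tri k' := by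
  obtain ⟨j, rfl⟩ : ∃ j, k = j + 2 := ⟨k - 2, by omega⟩
  have hj : tri (j + 2) = tri (j + 1) + (j + 2) := tri_succ _
  rcases le_or_gt k' (j + 1) with h | h
  · have := tri_strictMono.monotone h
    omega
  · have := tri_strictMono.monotone (show j + 2 ≤ k' by omega)
    omega

theorem le_five_of_tri_lt {q r s : ℕ} (hr : tri r + 1 < q) (hs : tri s < r + 1 + s)
    (hq : q ≤ r + 1 + s) : q ≤ 5 := by
  have hr' := two_mul_tri r
  have hs' := two_mul_tri s
  have hr2 : r ≤ 2 := by
    by_contra! h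
    have : 4 * r ≤ r * (r + 1) := by nlinarith
    have : 4 * s ≤ s * (s + 1) := by nlinarith
    linarith
  have hs2 : s ≤ 2 := by
    by_contra! h
    have : 4 * s ≤ s * (s + 1) := by nlinarith
    linarith
  omega

namespace TriWord

/-- `pref m = u[1..tri m]`: the step `m + 2` appends the block `ū[m+1] u[1..m+1]`
(1-based, as in the paper). -/
def pref : ℕ → List Bool
  | 0 => []
  | 1 => [true]
  | m + 2 => pref (m + 1) ++ (!(pref (m + 1)).getD m false) :: (pref (m + 1)).take (m + 1)

def u (n : ℕ) : Bool := (pref (n + 1)).getD n false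

theorem length_pref : ∀ m, (pref m).length = tri m
  | 0 => rfl
  | 1 => rfl
  | m + 2 => by
    simp only [pref, List.length_append, List.length_cons, List.length_take, length_pref (m + 1)]
    rw [min_eq_left (le_tri _), tri_succ (m + 1)]

theorem pref_prefix {a b : ℕ} (h : a ≤ b) : pref a <+: pref b := by
  induction b, h using Nat.le_induction with
  | base => exact List.prefix_refl _
  | succ m _ ih =>
    refine ih.trans ?_
    match m with
    | 0 => exact List.nil_prefix
    | m + 1 => exact ⟨_, rfl⟩

theorem getElem_pref {m i : ℕ} (h : i < (pref m).length) : (pref m)[i] = u i := by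
  have hi : i < (pref (i + 1)).length := by
    rw [length_pref]; exact lt_of_lt_of_le (by omega) (le_tri _)
  rw [u, List.getD_eq_getElem _ _ hi]
  rcases le_total m (i + 1) with hle | hle
  · exact (pref_prefix hle).getElem h
  · exact ((pref_prefix hle).getElem hi).symm

theorem u_tri_succ (j : ℕ) : u (tri (j + 1)) = !u j := by
  have hj : j < (pref (j + 1)).length := by
    rw [length_pref]; exact lt_of_lt_of_le (by omega) (le_tri _)
  have h : tri (j + 1) < (pref (j + 2)).length := by
    rw [length_pref, tri_succ (j + 1)]; omega
  rw [← getElem_pref h]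
  simp only [pref, List.getD_eq_getElem _ _ hj, getElem_pref hj]
  rw [List.getElem_append_right (by rw [length_pref]), List.getElem_cons]
  simp [length_pref]

theorem u_tri_add {q k : ℕ} (hk : k < q) : u (tri q + 1 + k) = u k := by
  obtain ⟨j, rfl⟩ : ∃ j, q = j + 1 := ⟨q - 1, by omega⟩
  have hk' : k < (pref (j + 1)).length := by
    rw [length_pref]; exact lt_of_lt_of_le hk (le_tri _)
  have h : tri (j + 1) + 1 + k < (pref (j + 2)).length := by
    rw [length_pref, tri_succ (j + 1)]; omega
  rw [← getElem_pref h, ← getElem_pref hk']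
  simp only [pref]
  rw [List.getElem_append_right (by rw [length_pref]; omega)]
  have hidx : tri (j + 1) + 1 + k - (pref (j + 1)).length = k + 1 := by
    rw [length_pref]; omega
  simp only [hidx, List.getElem_cons_succ, List.getElem_take]

theorem borderBound_small : ∀ q < 6, ∀ s ≤ q, ∀ ℓ < tri q + 1 + s,
    PrefixOccursAt u ℓ (tri q + 1 + s - ℓ) → ℓ < q ∨ ℓ ≤ s := by
  decide +kernel

theorem occursAt_small : ∀ m < 6, ∀ p ≤ tri (m + 1),
    p + m ≤ tri (m + 1) → PrefixOccursAt u m p → p = 0 ∨ p = tri m + 1 := by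
  decide +kernel

/-- `PrefixOccursAt u ℓ (n - ℓ)` says that `u[1..ℓ]` is a suffix of `u[1..n]`. -/
def BorderBound (n : ℕ) : Prop :=
  ∀ q s ℓ, s ≤ q → n = tri q + 1 + s → ℓ < n → PrefixOccursAt u ℓ (n - ℓ) → ℓ < q ∨ ℓ ≤ s

theorem BorderBound.tri_lt {n ℓ : ℕ} (h : BorderBound n) (hℓ : ℓ < n)
    (ho : PrefixOccursAt u ℓ (n - ℓ)) : tri ℓ < n := by
  obtain ⟨q, s, hsq, rfl⟩ := exists_eq_tri_add (show 1 ≤ n by omega)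
  have hℓq : ℓ ≤ q := by rcases h q s ℓ hsq rfl hℓ ho with h | h <;> omega
  have := tri_strictMono.monotone hℓq
  omega

theorem le_five_of_straddle {N j r s : ℕ} (hB : ∀ m < N, BorderBound m)
    (hjN : tri (j + 1) < N) (hrsN : r + 1 + s < N) (hr : r < tri (j + 1)) (hsj : s ≤ j + 1)
    (hj : j ≤ r + s) (ho : PrefixOccursAt u (r + 1 + s) (tri (j + 1) - r)) : j + 1 ≤ 5 := by
  have hleft : PrefixOccursAt u r (tri (j + 1) - r) := fun i hi => ho i (by omega)
  have hmid : u r = !u j := by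
    rw [← u_tri_succ, ← ho r (by omega), Nat.sub_add_cancel hr.le]
  have hright : PrefixOccursAt u s (r + 1) := fun i hi => by
    rw [← u_tri_add (show i < j + 1 by omega), ← ho (r + 1 + i) (by omega)]
    congr 1
    omega
  rcases Nat.eq_zero_or_pos r with rfl | hr0
  · have := hright.eq_zero j (by omega)
    rw [hmid] at this
    simp at this
  have hrj : r < j := by
    have := tri_strictMono.lt_iff_lt.mp ((hB _ hjN).tri_lt hr hleft)
    rcases (show r < j ∨ r = j by omega) with h | rfl
    · exact h
    · simp at hmid
  have hleft' : PrefixOccursAt u r (j - r) := fun i hi => by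
    rw [← hleft i hi, show tri (j + 1) - r + i = tri j + 1 + (j - r + i) by rw [tri_succ]; omega,
      u_tri_add (by omega)]
  have hjr : tri r < j :=
    (hB j (by have := le_tri (j + 1); omega)).tri_lt hrj hleft'
  have hsr : tri s < r + 1 + s :=
    (hB _ hrsN).tri_lt (by omega) (by rwa [show r + 1 + s - s = r + 1 by omega])
  exact le_five_of_tri_lt (by omega) hsr (by omega)

theorem borderBound (n : ℕ) : BorderBound n := by
  induction n using Nat.strong_induction_on with
  | _ n ih =>
  rintro q s ℓ hsq rfl hℓ ho
  by_cases hq : q < 6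
  · exact borderBound_small q hq s hsq ℓ hℓ ho
  by_contra! hbig
  obtain ⟨j, rfl⟩ : ∃ j, q = j + 1 := ⟨q - 1, by omega⟩
  obtain ⟨r, rfl⟩ : ∃ r, ℓ = r + 1 + s := ⟨ℓ - s - 1, by omega⟩
  rw [show tri (j + 1) + 1 + s - (r + 1 + s) = tri (j + 1) - r by omega] at ho
  have := le_five_of_straddle ih (by omega) (by omega) (by omega) hsq (by omega) ho
  omega

theorem occursAt_eq (m : ℕ) {p : ℕ} (hp : p + m ≤ tri (m + 1)) (ho : PrefixOccursAt u m p) :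
    p = 0 ∨ p = tri m + 1 := by
  induction m generalizing p with
  | zero => exact occursAt_small 0 (by omega) p (by omega) hp ho
  | succ i ih =>
  by_cases hi : i + 1 < 6
  · exact occursAt_small (i + 1) hi p (by omega) hp ho
  have htri : tri (i + 1 + 1) = tri (i + 1) + (i + 2) := tri_succ _
  have hi1 := le_tri (i + 1)
  by_cases hin : p + (i + 1) ≤ tri (i + 1)
  · have := ih (by omega) fun k hk => ho k (by omega)
    rw [tri_succ] at hin
    omega
  rcases (show p = tri (i + 1) + 1 ∨ p ≤ tri (i + 1) by omega) with hp' | hp'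
  · exact Or.inr hp'
  obtain ⟨r, rfl, hri⟩ : ∃ r, p = tri (i + 1) - r ∧ r ≤ i :=
    ⟨tri (i + 1) - p, by omega, by omega⟩
  have := le_five_of_straddle (N := tri (i + 1) + i + 2) (s := i - r) (fun m _ => borderBound m)
    (by omega) (by omega) (by omega) (by omega) (by omega) fun k hk => ho k (by omega)
  omega

theorem isClosedWord_tri (m : ℕ) : IsClosedWord ((List.range (tri (m + 1))).map u) := by
  have htri : tri (m + 1) = tri m + 1 + m := by rw [tri_succ]; omega
  refine Or.inr ⟨(List.range m).map u, ⟨fun h => ?_, map_range_prefix u (by omega), ?_⟩, ?_⟩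
  · have := congrArg List.length h
    simp only [List.length_map, List.length_range] at this
    omega
  · refine (suffix_map_range_iff u _ _).2 ⟨by omega, fun k hk => ?_⟩
    rw [show tri (m + 1) - m + k = tri m + 1 + k by omega, u_tri_add hk]
  · intro p hp
    rw [occursAt_map_range_iff] at hp
    have := occursAt_eq m hp.1 hp.2
    simp only [List.length_map, List.length_range]
    omega

theorem not_isClosedWord {q s : ℕ} (hs : s < q) :
    ¬ IsClosedWord ((List.range (tri q + 1 + s)).map u) := by
  rintro (hlen | ⟨β, ⟨hne, hpre, hsuf⟩, hocc⟩)
  · simp only [List.length_map, List.length_range] at hlen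
    have := le_tri q
    omega
  obtain ⟨ℓ, rfl⟩ : ∃ ℓ, β = (List.range ℓ).map u := ⟨_, eq_map_range_of_prefix u hpre⟩
  have hℓ : ℓ < tri q + 1 + s := by
    have := hpre.length_le
    simp only [List.length_map, List.length_range] at this
    exact lt_of_le_of_ne this fun h => hne (by rw [h])
  have hℓq : ℓ < q := by
    have := borderBound _ q s ℓ hs.le rfl hℓ ((suffix_map_range_iff u _ _).1 hsuf).2
    omega
  obtain ⟨j, rfl⟩ : ∃ j, q = j + 1 := ⟨q - 1, by omega⟩
  have htri : tri (j + 1) = tri j + (j + 1) := tri_succ j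
  have := hocc (tri j + 1) ((occursAt_map_range_iff u _ _ _).2
    ⟨by omega, fun k hk => u_tri_add (by omega)⟩)
  simp only [List.length_map, List.length_range] at this
  omega

theorem isClosedWord_iff {n : ℕ} (hn : 1 ≤ n) :
    IsClosedWord ((List.range n).map u) ↔ ∃ k, 1 ≤ k ∧ n = tri k := by
  constructor
  · intro h
    obtain ⟨q, s, hsq, rfl⟩ := exists_eq_tri_add hn
    rcases hsq.lt_or_eq with hlt | rfl
    · exact absurd h (not_isClosedWord hlt)
    · exact ⟨s + 1, by omega, by rw [tri_succ]; omega⟩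
  · rintro ⟨k, hk, rfl⟩
    obtain ⟨m, rfl⟩ : ∃ m, k = m + 1 := ⟨k - 1, by omega⟩
    exact isClosedWord_tri m

theorem OCval_eq_one_iff {n i : ℕ} (hi : 1 ≤ i) (hin : i ≤ n) :
    OCval ((List.range n).map u) i = 1 ↔ ∃ k, 1 ≤ k ∧ i = tri k := by
  rw [OCval, take_map_range, min_eq_left hin, ← isClosedWord_iff hi]
  split_ifs with h <;> simp [h]

theorem ocRuns_eq {N L : ℕ} (hN : 1 ≤ N) (hL : L + 1 = tri (N + 1)) :
    ocRuns ((List.range L).map u) = N := by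
  have hfilter : (Finset.Icc 1 L).filter (fun i => OCval ((List.range L).map u) i = 1 ∧
      (i = 1 ∨ OCval ((List.range L).map u) (i - 1) = 0)) = (Finset.Icc 1 N).image tri := by
    ext i
    simp only [Finset.mem_filter, Finset.mem_image, Finset.mem_Icc]
    constructor
    · rintro ⟨⟨hi, hiL⟩, hone, -⟩
      obtain ⟨k, hk, rfl⟩ := (OCval_eq_one_iff hi hiL).1 hone
      have := tri_strictMono.lt_iff_lt.mp (show tri k < tri (N + 1) by omega)
      exact ⟨k, ⟨hk, by omega⟩, rfl⟩
    · rintro ⟨k, ⟨hk, hkN⟩, rfl⟩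
      have hk1 := le_tri k
      have hkL := tri_strictMono (show k < N + 1 by omega)
      refine ⟨⟨by omega, by omega⟩, (OCval_eq_one_iff (by omega) (by omega)).2 ⟨k, hk, rfl⟩, ?_⟩
      rcases hk.lt_or_eq with hk2 | rfl
      · right
        rw [OCval_eq_zero_iff, Ne, OCval_eq_one_iff (by omega) (by omega)]
        rintro ⟨k', -, hk'⟩
        exact tri_sub_one_ne hk2 k' hk'
      · exact Or.inl rfl
  rw [ocRuns, List.length_map, List.length_range, hfilter,
    Finset.card_image_of_injective _ tri_strictMono.injective, Nat.card_Icc]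
  omega

end TriWord

open Classical in
/-- There is an infinite binary string whose OC array (entrywise,
on every prefix) is `∏_{k>0} 1 0^k`, i.e. the `n`-th entry is `1` exactly when
`n` is a triangular number `k(k+1)/2` with `k ≥ 1`; consequently for every
`N ≥ 1` its prefix of length `Σ_{k=1}^{N}(k+1)` has exactly `N` runs of `1`s
in its OC array, so the `O(√n)` bound on the number of runs is tight. -/
theorem statement_15 :
    ∃ u : ℕ → Bool,
      (∀ n : ℕ, 1 ≤ n →
        OCval ((List.range n).map u) n =
          if ∃ k : ℕ, 1 ≤ k ∧ n = k * (k + 1) / 2 then 1 else 0) ∧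
      (∀ N : ℕ, 1 ≤ N →
        ocRuns ((List.range (∑ k ∈ Finset.Icc 1 N, (k + 1))).map u) = N) := by
  refine ⟨TriWord.u, fun n hn => ?_, fun N hN => ?_⟩
  · simp only [div_two_eq_tri]
    split_ifs with h
    · exact (TriWord.OCval_eq_one_iff hn le_rfl).2 h
    · exact (OCval_eq_zero_iff _ _).2 (mt (TriWord.OCval_eq_one_iff hn le_rfl).1 h)
  · exact TriWord.ocRuns_eq hN (sum_Icc_add_one_add_one N)
end
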